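/- arXiv:2403.11065 — 2 statements merged into one kernel-verified Lean document; each statement's English description precedes it below -/
import Mathlib

section
/- For |x| < 1 and real t, log(1 - 2x cos t + x²) = -2 ∑_{k=1}^∞ (xᵏ/k) cos(kt), with the series converging. -/
open Complex in
/-- For `|x| < 1` and real `t`: `log (1 - 2x cos t + x²) = -2 ∑_{k≥1} (xᵏ/k) cos (k t)`,
the series converging. -/
theorem stmt9 (x t : ℝ) (hx : |x| < 1) :
    ∃ S : ℝ, HasSum (fun k : ℕ => x ^ (k + 1) / (k + 1) * Real.cos ((k + 1) * t)) S ∧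
      Real.log (1 - 2 * x * Real.cos t + x ^ 2) = -2 * S := by
  set z : ℂ := x * Complex.exp (t * Complex.I) with hz
  have hnz : ‖z‖ < 1 := by
    have : ‖z‖ = |x| := by
      rw [hz, norm_mul, Complex.norm_real, Real.norm_eq_abs,
        Complex.norm_exp_ofReal_mul_I, mul_one]
    rw [this]; exact hx
  have h := Complex.hasSum_re (Complex.hasSum_taylorSeries_neg_log hnz)
  have hterm : ∀ n : ℕ, (z ^ n / n).re = x ^ n / n * Real.cos (n * t) := by
    intro n
    have h2 : z ^ n / n = ((x ^ n / n : ℝ) : ℂ) * Complex.exp (((n * t : ℝ) : ℂ) * Complex.I) := by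
      rw [hz, mul_pow, ← Complex.exp_nat_mul]
      push_cast
      ring
    rw [h2, Complex.re_ofReal_mul, Complex.exp_ofReal_mul_I_re]
  rw [show (fun n : ℕ => (z ^ n / n).re) = fun n : ℕ => x ^ n / n * Real.cos (n * t)
    from funext hterm] at h
  have h1 : HasSum (fun k : ℕ => x ^ (k + 1) / (k + 1) * Real.cos ((k + 1) * t))
      ((-Complex.log (1 - z)).re - ∑ i ∈ Finset.range 1, x ^ i / i * Real.cos (i * t)) := by
    have h2 := (hasSum_nat_add_iff' (f := fun n : ℕ => x ^ n / n * Real.cos (n * t)) 1).mpr h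
    convert h2 using 2 with k
    case e'_3 => rfl
    push_cast; ring_nf
  refine ⟨_, h1, ?_⟩
  have habs : 1 - 2 * x * Real.cos t + x ^ 2 = (‖1 - z‖) ^ 2 := by
    rw [Complex.sq_norm, Complex.normSq_apply, hz]
    simp [Complex.sub_re, Complex.sub_im, Complex.re_ofReal_mul, Complex.im_ofReal_mul,
      Complex.exp_ofReal_mul_I_re, Complex.exp_ofReal_mul_I_im]
    nlinarith [Real.sin_sq_add_cos_sq t]
  rw [habs, Real.log_pow]
  simp only [Finset.range_one, Finset.sum_singleton, Nat.cast_zero]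
  rw [Complex.neg_re, Complex.log_re]
  push_cast
  ring
end

section
/- For γ ∈ PSU(1,1) and w ∈ ℂ, the weighted composition operator T_γ(f)(z) := f(γ⁻¹(z)) · (γ⁻¹)'(z) satisfies T_γ(1/(w - ·))(z) = 1/(γ(w) - z) - 1/(γ(∞) - z). -/
open Complex

/-- The weighted composition operator `T_γ f z = f (γ⁻¹ z) * (γ⁻¹)' z` applied to the
Cauchy kernel `u ↦ 1/(w - u)` gives `1/(γ w - z) - 1/(γ ∞ - z)`. -/
theorem stmt13 (a b z w : ℂ) (hab : ‖a‖ ^ 2 - ‖b‖ ^ 2 = 1) (hb : b ≠ 0)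
    (hden1 : -(starRingEnd ℂ) b * z + a ≠ 0)
    (hden2 : (starRingEnd ℂ) b * w + (starRingEnd ℂ) a ≠ 0)
    (hw : w - ((starRingEnd ℂ) a * z - b) / (-(starRingEnd ℂ) b * z + a) ≠ 0)
    (hz1 : (a * w + b) / ((starRingEnd ℂ) b * w + (starRingEnd ℂ) a) - z ≠ 0)
    (hz2 : a / (starRingEnd ℂ) b - z ≠ 0) :
    (1 / (w - ((starRingEnd ℂ) a * z - b) / (-(starRingEnd ℂ) b * z + a))) *
        (1 / (-(starRingEnd ℂ) b * z + a) ^ 2) =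
      1 / ((a * w + b) / ((starRingEnd ℂ) b * w + (starRingEnd ℂ) a) - z) -
        1 / (a / (starRingEnd ℂ) b - z) := by
  have hab' : a * (starRingEnd ℂ) a - b * (starRingEnd ℂ) b = 1 := by
    have h1 : ((‖a‖ : ℂ)) ^ 2 = a * (starRingEnd ℂ) a := by
      rw [Complex.mul_conj]; norm_cast; exact Complex.sq_norm a
    have h2 : ((‖b‖ : ℂ)) ^ 2 = b * (starRingEnd ℂ) b := by
      rw [Complex.mul_conj]; norm_cast; exact Complex.sq_norm b
    have := congrArg (Complex.ofReal) hab
    push_cast at this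
    rw [h1, h2] at this
    simpa using this
  have hb' : (starRingEnd ℂ) b ≠ 0 := by simpa using hb
  have e1 : w - ((starRingEnd ℂ) a * z - b) / (-(starRingEnd ℂ) b * z + a)
      = (w * (-(starRingEnd ℂ) b * z + a) - ((starRingEnd ℂ) a * z - b)) /
        (-(starRingEnd ℂ) b * z + a) := by
    rw [eq_div_iff hden1, sub_mul, div_mul_cancel₀ _ hden1]
  have e2 : (a * w + b) / ((starRingEnd ℂ) b * w + (starRingEnd ℂ) a) - z
      = (w * (-(starRingEnd ℂ) b * z + a) - ((starRingEnd ℂ) a * z - b)) /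
        ((starRingEnd ℂ) b * w + (starRingEnd ℂ) a) := by
    rw [eq_div_iff hden2, sub_mul, div_mul_cancel₀ _ hden2]
    ring
  have e3 : a / (starRingEnd ℂ) b - z
      = (-(starRingEnd ℂ) b * z + a) / (starRingEnd ℂ) b := by
    rw [eq_div_iff hb', sub_mul, div_mul_cancel₀ _ hb']
    ring
  have hw' : w * (-(starRingEnd ℂ) b * z + a) - ((starRingEnd ℂ) a * z - b) ≠ 0 := by
    rw [e1] at hw
    exact fun h => hw (by rw [h, zero_div])
  rw [e1, e2, e3, one_div_div, one_div_div, one_div_div]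
  rw [div_sub_div _ _ hw' hden1]
  have key : ((starRingEnd ℂ) b * w + (starRingEnd ℂ) a) * (-(starRingEnd ℂ) b * z + a) -
      (w * (-(starRingEnd ℂ) b * z + a) - ((starRingEnd ℂ) a * z - b)) * (starRingEnd ℂ) b
      = 1 := by linear_combination hab'
  rw [key]
  rw [div_mul_div_comm, mul_one]
  rw [div_eq_div_iff (mul_ne_zero hw' (pow_ne_zero 2 hden1)) (mul_ne_zero hw' hden1)]
  ring
end
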